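/- Let A = diag(2, 2, 1/4) and B = diag(2, 1, 1/2) in SL(3,ℝ), and let 𝒜 = {A, B}. Then the limit set Λ_𝒜 is the singleton {p}, where p ∈ ℝP^2 is the projection of the point (1,0,0). -/

import Mathlib

open Matrix Filter MeasureTheory Metric Set Topology
open scoped Topology ENNReal

noncomputable section

namespace SelfProjectiveSurvey

/-- The space of `d × d` real matrices. -/
abbrev Mat (d : ℕ) := Matrix (Fin d) (Fin d) ℝ

/-- `d`-dimensional Euclidean space.  The unit sphere inside it, with antipodal points
identified (all our sets and measures on it are symmetric), is our model for the
projective space `ℝP^{d-1}` together with the metric induced by angles. -/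
abbrev Euc (d : ℕ) := EuclideanSpace ℝ (Fin d)

/-- The (L²) operator norm of a `d × d` real matrix. -/
def opNorm {d : ℕ} (M : Mat d) : ℝ :=
  ‖LinearMap.toContinuousLinearMap (Matrix.toEuclideanLin M)‖

/-- The `i`-th singular value of `M` (in decreasing order, so `i = 0` is the largest):
the square roots of the eigenvalues of `Mᴴ * M = Mᵀ * M`, sorted decreasingly. -/
def singVal {d : ℕ} (M : Mat d) (i : Fin d) : ℝ :=
  Real.sqrt ((Matrix.isHermitian_conjTranspose_mul_self M).eigenvalues
    (Tuple.sort (Matrix.isHermitian_conjTranspose_mul_self M).eigenvalues i.rev))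

/-- The semigroup generated by a set `𝒜` of matrices: all products of finitely many
(at least one) elements of `𝒜`. -/
def genS {d : ℕ} (𝒜 : Set (Mat d)) : Set (Mat d) :=
  {M | ∃ l : List (Mat d), l ≠ [] ∧ (∀ B ∈ l, B ∈ 𝒜) ∧ M = l.prod}

/-- `ℝG = {k • A : k ∈ ℝ, A ∈ G}` for `G` the semigroup generated by `𝒜`. -/
def RGS {d : ℕ} (𝒜 : Set (Mat d)) : Set (Mat d) :=
  {M | ∃ k : ℝ, ∃ B ∈ genS 𝒜, M = k • B}

/-- The rank-one elements of the closure of `ℝG` (the closure being taken in the space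
of `d × d` real matrices with its usual topology). -/
def rankOneS {d : ℕ} (𝒜 : Set (Mat d)) : Set (Mat d) :=
  {π | π ∈ closure (RGS 𝒜) ∧ π.rank = 1}

/-- The limit set of `𝒜`, in the unit-sphere (double cover) model of `ℝP^{d-1}`:
the set of unit vectors spanning the image of some rank-one element of `closure (ℝG)`. -/
def limitSetS {d : ℕ} (𝒜 : Set (Mat d)) : Set (Euc d) :=
  {v | ‖v‖ = 1 ∧ ∃ π ∈ rankOneS 𝒜,
    Submodule.span ℝ {v} = LinearMap.range (Matrix.toEuclideanLin π)}

/-- The product of the word `l` in the alphabet `A 0, …, A (N-1)`. -/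
def wordProd {d N : ℕ} (A : Fin N → Mat d) (l : List (Fin N)) : Mat d := (l.map A).prod

/-- The product along a word of length `n`, given as a function `Fin n → Fin N`. -/
def wp {d N : ℕ} (A : Fin N → Mat d) {n : ℕ} (ii : Fin n → Fin N) : Mat d :=
  wordProd A (List.ofFn ii)

/-- The semigroup generated by the tuple `A`. -/
def gen {d N : ℕ} (A : Fin N → Mat d) : Set (Mat d) :=
  {M | ∃ l : List (Fin N), l ≠ [] ∧ M = wordProd A l}

/-- The limit set of the finite set `𝒜 = {A 0, …, A (N-1)}` in the sphere model. -/
def limitSet {d N : ℕ} (A : Fin N → Mat d) : Set (Euc d) :=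
  limitSetS (Set.range A)

/-- `M` has `lam` as a *simple leading eigenvalue*: as a root of the (complex) characteristic
polynomial it has multiplicity one, and every other complex root has strictly smaller
modulus.  A matrix admitting such an eigenvalue is called *proximal*. -/
def LeadingSimple {d : ℕ} (M : Mat d) (lam : ℝ) : Prop :=
  Polynomial.rootMultiplicity (lam : ℂ) (Matrix.charpoly (M.map Complex.ofReal)) = 1 ∧
  ∀ μ : ℂ, (Matrix.charpoly (M.map Complex.ofReal)).IsRoot μ → μ ≠ (lam : ℂ) →
    ‖μ‖ < |lam|

/-- A matrix is proximal if it has a simple leading eigenvalue. -/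
def IsProximal {d : ℕ} (M : Mat d) : Prop := ∃ lam : ℝ, LeadingSimple M lam

/-- The semigroup generated by `𝒜` is irreducible: no proper nonzero linear subspace of
`ℝ^d` is preserved by every element. -/
def IrreducibleS {d : ℕ} (𝒜 : Set (Mat d)) : Prop :=
  ∀ W : Submodule ℝ (Euc d),
    (∀ M ∈ genS 𝒜, W.map (Matrix.toEuclideanLin M) ≤ W) → W = ⊥ ∨ W = ⊤

/-- The semigroup generated by `𝒜` is strongly irreducible: there is no finite (nonempty)
family of proper nonzero subspaces of `ℝ^d` whose union is preserved by all elements. -/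
def StronglyIrreducibleS {d : ℕ} (𝒜 : Set (Mat d)) : Prop :=
  ¬ ∃ S : Finset (Submodule ℝ (Euc d)), S.Nonempty ∧ (∀ W ∈ S, W ≠ ⊥ ∧ W ≠ ⊤) ∧
      ∀ M ∈ genS 𝒜, ∀ W ∈ S, ∃ W' ∈ S, W.map (Matrix.toEuclideanLin M) ≤ W'

/-- Attracting fixed points of proximal elements of the semigroup generated by `𝒜`, in the
sphere model: unit eigenvectors for a simple leading eigenvalue of an element of the semigroup. -/
def attractingPoints {d : ℕ} (𝒜 : Set (Mat d)) : Set (Euc d) :=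
  {v | ‖v‖ = 1 ∧ ∃ M ∈ genS 𝒜, ∃ lam : ℝ, LeadingSimple M lam ∧
    Matrix.toEuclideanLin M v = lam • v}

/-- `𝒜` is semidiscrete: the closure of the semigroup it generates does not contain
the identity. -/
def Semidiscrete {d N : ℕ} (A : Fin N → Mat d) : Prop :=
  (1 : Mat d) ∉ closure (gen A)

/-- The semigroup generated by the set `𝒜` is free, freely generated by `𝒜`:
distinct nonempty words in elements of `𝒜` give distinct matrices. -/
def FreeGenS {d : ℕ} (𝒜 : Set (Mat d)) : Prop :=
  ∀ l l' : List (Mat d), (∀ B ∈ l, B ∈ 𝒜) → (∀ B ∈ l', B ∈ 𝒜) →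
    l ≠ [] → l' ≠ [] → l.prod = l'.prod → l = l'

/-- `𝒜 = {A 0, …, A (N-1)}` is Diophantine: there is `c > 0` such that distinct products
along words of the same length `n` are at distance at least `cⁿ`. -/
def Diophantine {d N : ℕ} (A : Fin N → Mat d) : Prop :=
  ∃ c : ℝ, 0 < c ∧ ∀ (n : ℕ) (ii jj : Fin (n+1) → Fin N),
    wp A ii ≠ wp A jj → c ^ (n + 1) ≤ opNorm (wp A ii - wp A jj)

/-- `𝒜` is strongly Diophantine: Diophantine and generating a free semigroup. -/
def StronglyDiophantine {d N : ℕ} (A : Fin N → Mat d) : Prop :=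
  Diophantine A ∧ FreeGenS (Set.range A)

/-- `𝒜 ⊂ SL(2,ℝ)` is uniformly hyperbolic: there are `λ > 1` and `c > 0` with
`‖A‖ ≥ c λⁿ` for every product `A` of `n ≥ 1` matrices from `𝒜`. -/
def UniformlyHyperbolic {N : ℕ} (A : Fin N → Mat 2) : Prop :=
  ∃ c : ℝ, 0 < c ∧ ∃ lam : ℝ, 1 < lam ∧
    ∀ (n : ℕ) (ii : Fin (n+1) → Fin N), c * lam ^ (n + 1) ≤ opNorm (wp A ii)

/-- The zeta function `ζ_𝒜(s) = Σ_{n ≥ 1} Σ_{A ∈ 𝒜ⁿ} ‖A‖^{-2s}` (products counted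
with multiplicity). -/
def zeta {N : ℕ} (A : Fin N → Mat 2) (s : ℝ) : ℝ≥0∞ :=
  ∑' n : ℕ, ∑ ii : Fin (n+1) → Fin N, ENNReal.ofReal (opNorm (wp A ii) ^ (-(2 * s)))

/-- The critical exponent `s_𝒜 = inf {s ≥ 0 : ζ_𝒜(s) < ∞}` (equal to `∞` when the zeta
function is nowhere finite). -/
def sCrit {N : ℕ} (A : Fin N → Mat 2) : ℝ≥0∞ :=
  sInf {t : ℝ≥0∞ | ∃ s : ℝ, 0 ≤ s ∧ t = ENNReal.ofReal s ∧ zeta A s < ⊤}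

/-- `S` is (the sphere model of) a single point of projective space. -/
def ProjSingleton {d : ℕ} (S : Set (Euc d)) : Prop := ∃ v : Euc d, S = {v, -v}

/-- The projective action of `M`, lifted to the sphere model: `v ↦ M v / ‖M v‖`
(with the junk value `0` at `v = 0`). -/
def sphMap {d : ℕ} (M : Mat d) (v : Euc d) : Euc d :=
  ‖Matrix.toEuclideanLin M v‖⁻¹ • Matrix.toEuclideanLin M v

/-- `ν` is `μ`-stationary, for `μ = Σ p i · δ_{A i}`:  `ν = Σ pᵢ (Aᵢ)_* ν`. -/
def IsStationary {d N : ℕ} (A : Fin N → Mat d) (p : Fin N → ℝ) (ν : Measure (Euc d)) : Prop :=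
  ν = ∑ i : Fin N, ENNReal.ofReal (p i) • ν.map (sphMap (A i))

/-- The sphere model of a measure on `ℝP^{d-1}`: a measure concentrated on the unit sphere
and invariant under the antipodal map. -/
def IsSphereMeasure {d : ℕ} (ν : Measure (Euc d)) : Prop :=
  ν ((Metric.sphere (0 : Euc d) 1))ᶜ = 0 ∧ ν.map (fun v => -v) = ν

/-- `ν` is exact dimensional with dimension `s`: at `ν`-almost every point the local
dimension exists and equals `s`. -/
def ExactDimWith {d : ℕ} (ν : Measure (Euc d)) (s : ℝ) : Prop :=
  ∀ᵐ x ∂ν, Tendsto (fun r : ℝ => Real.log (ν (Metric.closedBall x r)).toReal / Real.log r)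
    (𝓝[>] (0 : ℝ)) (𝓝 s)

/-- Shannon entropy `H(μ) = -Σ pᵢ log pᵢ`. -/
def shannon {N : ℕ} (p : Fin N → ℝ) : ℝ := -∑ i, p i * Real.log (p i)

open scoped Classical in
/-- The mass that the `n`-fold convolution `μ^{*n}` of `μ = Σ pᵢ δ_{A i}` gives to the
matrix `M`. -/
def prodWeight {d N : ℕ} (A : Fin N → Mat d) (p : Fin N → ℝ) (n : ℕ) (M : Mat d) : ℝ :=
  ∑ ii ∈ Finset.univ.filter (fun ii : Fin n → Fin N => wp A ii = M), ∏ j, p (ii j)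

open scoped Classical in
/-- The Shannon entropy `H(μ^{*n})` of the `n`-fold convolution of `μ = Σ pᵢ δ_{A i}`,
i.e. of the distribution of a product of `n` i.i.d. `μ`-distributed matrices. -/
def convEntropy {d N : ℕ} (A : Fin N → Mat d) (p : Fin N → ℝ) (n : ℕ) : ℝ :=
  -∑ M ∈ Finset.image (fun ii : Fin n → Fin N => wp A ii) Finset.univ,
    prodWeight A p n M * Real.log (prodWeight A p n M)

/-- `(1/n) E[log g(X_n ⋯ X_1)]` for words of length `n+1`: the expected value, over words of
length `n+1` weighted by `p`, of the logarithm of `g` of the product, divided by the length.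
Its limit as `n → ∞` (with `g` a norm or a singular value) is the corresponding
Lyapunov exponent. -/
def expLog {d N : ℕ} (A : Fin N → Mat d) (p : Fin N → ℝ) (g : Mat d → ℝ) (n : ℕ) : ℝ :=
  ((n : ℝ) + 1)⁻¹ * ∑ ii : Fin (n+1) → Fin N, (∏ j, p (ii j)) * Real.log (g (wp A ii))

/-- The Lyapunov dimension determined by an entropy `H` and Lyapunov exponents
`χ1 ≥ χ2 ≥ χ3`. -/
def lyapDim (H χ1 χ2 χ3 : ℝ) : ℝ :=
  if H ≤ χ1 - χ2 then H / (χ1 - χ2)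
  else if H ≤ 2 * χ1 - χ2 - χ3 then 1 + (H - (χ1 - χ2)) / (χ1 - χ3)
  else 2

/-- `𝒜` (an `N`-tuple in `SL(d,ℝ)`, `d ≥ 2`) is 1-dominated: there are `c > 0`, `λ > 1`
with `α₁(A)/α₂(A) ≥ c λⁿ` for every product `A` of `n ≥ 1` matrices from `𝒜`. -/
def OneDominated {d N : ℕ} (hd : 2 ≤ d) (A : Fin N → Mat d) : Prop :=
  ∃ c : ℝ, 0 < c ∧ ∃ lam : ℝ, 1 < lam ∧ ∀ (n : ℕ) (ii : Fin (n+1) → Fin N),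
    c * lam ^ (n + 1) ≤
      singVal (wp A ii) ⟨0, by omega⟩ / singVal (wp A ii) ⟨1, by omega⟩

open scoped Classical in
/-- The projective action of `M` on the unit sphere (subtype version). -/
def sphMapS {d : ℕ} (M : Mat d) (v : Metric.sphere (0 : Euc d) 1) :
    Metric.sphere (0 : Euc d) 1 :=
  if h : Matrix.toEuclideanLin M (v : Euc d) = 0 then v
  else ⟨sphMap M (v : Euc d), by
    have hw : ‖Matrix.toEuclideanLin M (v : Euc d)‖ ≠ 0 := norm_ne_zero_iff.mpr h
    simp [sphMap, mem_sphere_zero_iff_norm, norm_smul, Real.norm_eq_abs, abs_inv,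
      abs_norm, inv_mul_cancel₀ hw]⟩

/-- `k`-fold application of `B ↦ 𝒜(B) = ⋃_{A ∈ 𝒜} A · B` (projective action, sphere model). -/
def iterImg {d N : ℕ} (A : Fin N → Mat d) : ℕ → Set (Euc d) → Set (Euc d)
  | 0, B => B
  | n+1, B => ⋃ i : Fin N, sphMap (A i) '' iterImg A n B

/-- `K` is an attractor for `𝒜` (sphere model of a compact subset of `ℝP^{d-1}`):
`𝒜(K) = K` and there is an open set `U ⊇ K` (in `ℝP^{d-1}`, i.e. a symmetric relatively
open subset of the sphere) such that `𝒜^k(B) → K` in the Hausdorff metric for every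
nonempty compact `B ⊆ U`. -/
def IsAttractor {d N : ℕ} (A : Fin N → Mat d) (K : Set (Euc d)) : Prop :=
  IsCompact K ∧ K ⊆ Metric.sphere (0 : Euc d) 1 ∧ (∀ v ∈ K, -v ∈ K) ∧
  (⋃ i : Fin N, sphMap (A i) '' K) = K ∧
  ∃ V : Set (Euc d), IsOpen V ∧ (∀ v ∈ V, -v ∈ V) ∧ K ⊆ V ∧
    ∀ B : Set (Euc d), B ⊆ V ∩ Metric.sphere (0 : Euc d) 1 → IsCompact B → B.Nonempty →
      (∀ v ∈ B, -v ∈ B) →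
      Tendsto (fun k => EMetric.hausdorffEdist (iterImg A k B) K) atTop (𝓝 0)

/-- `𝒜 ⊂ SL(3,ℝ)` consists of strictly positive matrices. -/
def StrictlyPositive {N : ℕ} (A : Fin N → Mat 3) : Prop := ∀ i r c, 0 < A i r c

/-- The projective strong open set condition (sphere model): there is a symmetric relatively
open subset `U = V ∩ S²` of the sphere meeting the limit set such that the images `Aᵢ · U`
are pairwise disjoint and contained in `U`. -/
def PSOSC {N : ℕ} (A : Fin N → Mat 3) : Prop :=
  ∃ V : Set (Euc 3), IsOpen V ∧ (∀ v ∈ V, -v ∈ V) ∧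
    ((V ∩ Metric.sphere (0 : Euc 3) 1) ∩ limitSet A).Nonempty ∧
    (∀ i j : Fin N, i ≠ j →
      Disjoint (sphMap (A i) '' (V ∩ Metric.sphere (0 : Euc 3) 1))
        (sphMap (A j) '' (V ∩ Metric.sphere (0 : Euc 3) 1))) ∧
    (⋃ i : Fin N, sphMap (A i) '' (V ∩ Metric.sphere (0 : Euc 3) 1)) ⊆
      V ∩ Metric.sphere (0 : Euc 3) 1

/-- The semigroup generated by `𝒜` is Zariski dense in `SL(3,ℝ)`: every polynomial in the
nine matrix entries vanishing on the semigroup vanishes on all of `SL(3,ℝ)`. -/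
def ZariskiDense {N : ℕ} (A : Fin N → Mat 3) : Prop :=
  ∀ f : MvPolynomial (Fin 3 × Fin 3) ℝ,
    (∀ M ∈ gen A, MvPolynomial.eval (fun q => M q.1 q.2) f = 0) →
    ∀ M : Mat 3, M.det = 1 → MvPolynomial.eval (fun q => M q.1 q.2) f = 0

/-- The singular value function `φ^s` on `SL(3,ℝ)`. -/
def phi (s : ℝ) (M : Mat 3) : ℝ :=
  if s ≤ 1 then (singVal M 1 / singVal M 0) ^ s
  else if s ≤ 2 then (singVal M 1 / singVal M 0) * (singVal M 2 / singVal M 0) ^ (s - 1)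
  else (singVal M 1 * singVal M 2 / (singVal M 0) ^ 2) ^ s

/-- The affinity zeta function `ζ_𝒜(s) = Σ_{n ≥ 1} Σ_{A ∈ 𝒜ⁿ} φ^s(A)`. -/
def zetaAff {N : ℕ} (A : Fin N → Mat 3) (s : ℝ) : ℝ≥0∞ :=
  ∑' n : ℕ, ∑ ii : Fin (n+1) → Fin N, ENNReal.ofReal (phi s (wp A ii))

/-- The projective affinity dimension `s_𝒜 = inf {s ≥ 0 : ζ_𝒜(s) < ∞}`. -/
def sAff {N : ℕ} (A : Fin N → Mat 3) : ℝ≥0∞ :=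
  sInf {t : ℝ≥0∞ | ∃ s : ℝ, 0 ≤ s ∧ t = ENNReal.ofReal s ∧ zetaAff A s < ⊤}



section Statement14Aux

private abbrev A14 : Fin 2 → Mat 3 :=
  ![Matrix.diagonal ![(2 : ℝ), 2, 1/4], Matrix.diagonal ![(2 : ℝ), 1, 1/2]]

/-- diagonal with positive entries dominated by the first -/
private def Q14 (M : Mat 3) : Prop :=
  (∀ i j, i ≠ j → M i j = 0) ∧ 0 < M 0 0 ∧ 0 < M 1 1 ∧ M 1 1 ≤ M 0 0 ∧
    0 < M 2 2 ∧ M 2 2 ≤ M 0 0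

private lemma Q14A : Q14 (Matrix.diagonal ![(2 : ℝ), 2, 1/4]) := by
  refine ⟨fun i j h => Matrix.diagonal_apply_ne _ h, ?_, ?_, ?_, ?_, ?_⟩ <;>
    norm_num [Matrix.diagonal_apply_eq, Matrix.cons_val_two, Matrix.tail_cons, Matrix.head_cons]

private lemma Q14B : Q14 (Matrix.diagonal ![(2 : ℝ), 1, 1/2]) := by
  refine ⟨fun i j h => Matrix.diagonal_apply_ne _ h, ?_, ?_, ?_, ?_, ?_⟩ <;>
    norm_num [Matrix.diagonal_apply_eq, Matrix.cons_val_two, Matrix.tail_cons, Matrix.head_cons]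

private lemma mul_apply_of_diag14 {M N : Mat 3} (hM : ∀ i j, i ≠ j → M i j = 0) (i j : Fin 3) :
    (M * N) i j = M i i * N i j := by
  rw [Matrix.mul_apply]
  exact Finset.sum_eq_single_of_mem i (Finset.mem_univ i)
    (fun k _ hk => by rw [hM i k (Ne.symm hk), zero_mul])

private lemma Q14mul {M N : Mat 3} (hM : Q14 M) (hN : Q14 N) : Q14 (M * N) := by
  obtain ⟨hMd, hM0, hM1, hM10, hM2, hM20⟩ := hM
  obtain ⟨hNd, hN0, hN1, hN10, hN2, hN20⟩ := hN
  refine ⟨fun i j h => by rw [mul_apply_of_diag14 hMd, hNd i j h, mul_zero],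
    ?_, ?_, ?_, ?_, ?_⟩ <;> simp only [mul_apply_of_diag14 hMd]
  · exact mul_pos hM0 hN0
  · exact mul_pos hM1 hN1
  · exact mul_le_mul hM10 hN10 hN1.le (le_of_lt (lt_of_lt_of_le hM1 hM10))
  · exact mul_pos hM2 hN2
  · exact mul_le_mul hM20 hN20 hN2.le (le_of_lt (lt_of_lt_of_le hM2 hM20))

private lemma Q14gen : ∀ l : List (Mat 3), l ≠ [] → (∀ B ∈ l, B ∈ Set.range A14) →
    Q14 l.prod := by
  intro l
  induction l with
  | nil => intro h; exact absurd rfl h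
  | cons C t ih =>
    intro _ hmem
    have hC : Q14 C := by
      obtain ⟨i, hi⟩ := hmem C List.mem_cons_self
      fin_cases i
      · rw [← hi]; exact Q14A
      · rw [← hi]; exact Q14B
    by_cases ht : t = []
    · subst ht; simpa using hC
    · rw [List.prod_cons]
      exact Q14mul hC (ih ht fun B hB => hmem B (List.mem_cons_of_mem _ hB))

private def RSet14 : Set (Mat 3) :=
  ({M | ∀ i j, i ≠ j → M i j = 0} ∩ {M | |M 1 1| ≤ |M 0 0|}) ∩ {M | |M 2 2| ≤ |M 0 0|}

private lemma RGS_subset_RSet14 : RGS (Set.range A14) ⊆ RSet14 := by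
  rintro M ⟨k, B, hB, rfl⟩
  obtain ⟨l, hl, hlmem, rfl⟩ := hB
  obtain ⟨hd, h0, h1, h10, h2, h20⟩ := Q14gen l hl hlmem
  refine ⟨⟨fun i j h => by simp [Matrix.smul_apply, hd i j h], ?_⟩, ?_⟩
  · simp only [Set.mem_setOf_eq, Matrix.smul_apply, smul_eq_mul, abs_mul]
    exact mul_le_mul_of_nonneg_left
      (by rw [abs_of_pos h1, abs_of_pos h0]; exact h10) (abs_nonneg k)
  · simp only [Set.mem_setOf_eq, Matrix.smul_apply, smul_eq_mul, abs_mul]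
    exact mul_le_mul_of_nonneg_left
      (by rw [abs_of_pos h2, abs_of_pos h0]; exact h20) (abs_nonneg k)

private lemma RSet14_closed : IsClosed RSet14 := by
  have hc : ∀ i j : Fin 3, Continuous fun M : Mat 3 => M i j := fun i j =>
    (continuous_apply j).comp (continuous_apply i)
  refine IsClosed.inter (IsClosed.inter ?_ ?_) ?_
  · have he : {M : Mat 3 | ∀ i j, i ≠ j → M i j = 0} =
        ⋂ (i) (j) (_ : i ≠ j), {M : Mat 3 | M i j = 0} := by
      ext M; simp [Set.mem_iInter]
    rw [he]
    exact isClosed_iInter fun i => isClosed_iInter fun j => isClosed_iInter fun _ =>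
      isClosed_eq (hc i j) continuous_const
  · exact isClosed_le ((hc 1 1).abs) ((hc 0 0).abs)
  · exact isClosed_le ((hc 2 2).abs) ((hc 0 0).abs)

private lemma range_diag14 (d : Fin 3 → ℝ) (hd0 : d 0 ≠ 0) (hd1 : d 1 = 0) (hd2 : d 2 = 0) :
    LinearMap.range (Matrix.toEuclideanLin (Matrix.diagonal d)) =
      Submodule.span ℝ {EuclideanSpace.single (0 : Fin 3) (1 : ℝ)} := by
  have key : ∀ v : Euc 3, Matrix.toEuclideanLin (Matrix.diagonal d) v =
      (d 0 * v 0) • EuclideanSpace.single (0 : Fin 3) (1 : ℝ) := by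
    intro v
    ext i
    rw [Matrix.toEuclideanLin_apply]
    fin_cases i <;>
      simp [Matrix.mulVec_diagonal,
        EuclideanSpace.single_apply, hd1, hd2, PiLp.smul_apply]
  apply le_antisymm
  · rintro w ⟨u, rfl⟩
    rw [key]
    exact Submodule.smul_mem _ _ (Submodule.mem_span_singleton_self _)
  · rw [Submodule.span_le, Set.singleton_subset_iff]
    refine ⟨(d 0)⁻¹ • EuclideanSpace.single (0 : Fin 3) (1 : ℝ), ?_⟩
    rw [key]
    simp [PiLp.smul_apply, EuclideanSpace.single_apply, mul_inv_cancel₀ hd0]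

private lemma limit_mem_closure14 :
    Matrix.diagonal ![(1 : ℝ), 0, 0] ∈ closure (RGS (Set.range A14)) := by
  have hmem : ∀ n : ℕ,
      Matrix.diagonal ![(1 : ℝ), (1/2) ^ (n+1), (1/4) ^ (n+1)] ∈ RGS (Set.range A14) := by
    intro n
    refine ⟨(1/2) ^ (n+1), (Matrix.diagonal ![(2 : ℝ), 1, 1/2]) ^ (n+1),
      ⟨List.replicate (n+1) (Matrix.diagonal ![(2 : ℝ), 1, 1/2]), by simp, ?_, ?_⟩, ?_⟩
    · intro B hB
      rw [List.eq_of_mem_replicate hB]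
      exact ⟨1, rfl⟩
    · rw [List.prod_replicate]
    · have hv : ((1/2 : ℝ) ^ (n+1)) • (![(2 : ℝ), 1, 1/2] ^ (n+1)) =
          ![(1 : ℝ), (1/2) ^ (n+1), (1/4) ^ (n+1)] := by
        funext i
        fin_cases i <;>
          · simp only [Pi.smul_apply, Pi.pow_apply, smul_eq_mul, Matrix.cons_val_zero,
              Matrix.cons_val_one, Matrix.head_cons, Matrix.cons_val_two, Matrix.tail_cons,
              ← mul_pow]
            norm_num
      rw [Matrix.diagonal_pow, ← Matrix.diagonal_smul, hv]
  have hev : ∀ᶠ n in (atTop : Filter ℕ),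
      Matrix.diagonal ![(1 : ℝ), (1/2) ^ (n+1), (1/4) ^ (n+1)] ∈ RGS (Set.range A14) :=
    Filter.Eventually.of_forall hmem
  refine mem_closure_of_tendsto ?_ hev
  have hdiagc : Continuous fun v : Fin 3 → ℝ => Matrix.diagonal v :=
    continuous_id.matrix_diagonal
  refine ((hdiagc.tendsto _).comp ?_ : _)
  rw [tendsto_pi_nhds]
  have h2 : Tendsto (fun n : ℕ => ((1:ℝ)/2) ^ (n+1)) atTop (𝓝 0) :=
    (tendsto_pow_atTop_nhds_zero_of_lt_one (by norm_num) (by norm_num)).comp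
      (tendsto_add_atTop_nat 1)
  have h4 : Tendsto (fun n : ℕ => ((1:ℝ)/4) ^ (n+1)) atTop (𝓝 0) :=
    (tendsto_pow_atTop_nhds_zero_of_lt_one (by norm_num) (by norm_num)).comp
      (tendsto_add_atTop_nat 1)
  intro i
  fin_cases i
  · simpa using tendsto_const_nhds
  · simpa using h2
  · simpa using h4

private lemma rank_limit14 : (Matrix.diagonal ![(1 : ℝ), 0, 0]).rank = 1 := by
  rw [Matrix.rank_diagonal]
  have he : ∀ i : Fin 3, ![(1 : ℝ), 0, 0] i ≠ 0 ↔ i = 0 := by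
    intro i; fin_cases i <;> simp
  rw [Fintype.card_congr (Equiv.subtypeEquivRight he)]
  exact Fintype.card_subtype_eq 0

end Statement14Aux

/-- For `A = diag(2, 2, 1/4)` and `B = diag(2, 1, 1/2)` in `SL(3,ℝ)`,
the limit set of `𝒜 = {A, B}` is the single point of `ℝP²` given by the projection of
`(1,0,0)` (sphere model: the two antipodal unit vectors `± e₀`). -/
theorem statement14 :
    limitSet ![Matrix.diagonal ![(2 : ℝ), 2, 1/4], Matrix.diagonal ![(2 : ℝ), 1, 1/2]] =
      {EuclideanSpace.single (0 : Fin 3) (1 : ℝ),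
        -(EuclideanSpace.single (0 : Fin 3) (1 : ℝ))} := by
  ext v
  simp only [limitSet, limitSetS, rankOneS, Set.mem_setOf_eq, Set.mem_insert_iff,
    Set.mem_singleton_iff]
  constructor
  · rintro ⟨hv, π, ⟨hπc, hπr⟩, hspan⟩
    obtain ⟨⟨hd, h1⟩, h2⟩ := closure_minimal RGS_subset_RSet14 RSet14_closed hπc
    simp only [Set.mem_setOf_eq] at hd h1 h2
    have hπdiag : π = Matrix.diagonal (fun i => π i i) := by
      ext i j
      by_cases h : i = j
      · subst h; rw [Matrix.diagonal_apply_eq]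
      · rw [Matrix.diagonal_apply_ne _ h]; exact hd i j h
    have h00 : π 0 0 ≠ 0 := by
      intro h0
      have e1 : π 1 1 = 0 := by
        rw [h0, abs_zero] at h1
        exact abs_eq_zero.mp (le_antisymm h1 (abs_nonneg _))
      have e2 : π 2 2 = 0 := by
        rw [h0, abs_zero] at h2
        exact abs_eq_zero.mp (le_antisymm h2 (abs_nonneg _))
      have hz : π = 0 := by
        ext i j
        by_cases h : i = j
        · subst h
          fin_cases i
          · simpa using h0
          · simpa using e1
          · simpa using e2
        · simpa using hd i j h
      rw [hz, Matrix.rank_zero] at hπr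
      exact absurd hπr (by norm_num)
    rw [hπdiag, Matrix.rank_diagonal] at hπr
    have hzero : ∀ i : Fin 3, i ≠ 0 → π i i = 0 := by
      intro i hi
      by_contra hne
      obtain ⟨x, hx⟩ := Fintype.card_eq_one_iff.mp hπr
      have ha := hx ⟨0, h00⟩
      have hb := hx ⟨i, hne⟩
      exact hi (congrArg Subtype.val (hb.trans ha.symm))
    have hrange := range_diag14 (fun i => π i i) h00
      (hzero 1 (by decide)) (hzero 2 (by decide))
    rw [← hπdiag] at hrange
    rw [hrange] at hspan
    have hv0 : v ∈ Submodule.span ℝ {EuclideanSpace.single (0 : Fin 3) (1 : ℝ)} := by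
      rw [← hspan]; exact Submodule.mem_span_singleton_self v
    obtain ⟨c, hc⟩ := Submodule.mem_span_singleton.mp hv0
    have hcabs : |c| = 1 := by
      rw [← hc, norm_smul, EuclideanSpace.norm_single, norm_one, mul_one,
        Real.norm_eq_abs] at hv
      exact hv
    rcases (abs_eq (by norm_num : (0:ℝ) ≤ 1)).mp hcabs with h | h
    · left; rw [← hc, h, one_smul]
    · right; rw [← hc, h, neg_one_smul]
  · intro hv
    have hrange := range_diag14 ![(1 : ℝ), 0, 0] (by norm_num) (by simp) (by simp)
    have hnorm : ‖v‖ = 1 := by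
      rcases hv with rfl | rfl
      · rw [EuclideanSpace.norm_single, norm_one]
      · rw [norm_neg, EuclideanSpace.norm_single, norm_one]
    have hspan : Submodule.span ℝ {v} =
        Submodule.span ℝ {EuclideanSpace.single (0 : Fin 3) (1 : ℝ)} := by
      rcases hv with rfl | rfl
      · rfl
      · rw [show -(EuclideanSpace.single (0 : Fin 3) (1 : ℝ)) =
            (-1 : ℝ) • EuclideanSpace.single (0 : Fin 3) (1 : ℝ) by rw [neg_one_smul]]
        exact Submodule.span_singleton_smul_eq (isUnit_one.neg) _
    exact ⟨hnorm, Matrix.diagonal ![(1 : ℝ), 0, 0], ⟨limit_mem_closure14, rank_limit14⟩,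
      by rw [hrange]; exact hspan⟩

end SelfProjectiveSurvey
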